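/- arXiv:2006.16600 — 3 statements merged into one kernel-verified Lean document; each statement's English description precedes it below -/
import Mathlib

section
/- Let p(·) be a sampling design on a finite population U of size N represented by a splitting (martingale) scheme in T steps, so that the Horvitz–Thompson estimator satisfies t̂ - t = Σ_{t=1}^T ξ(t) where ξ(t) = Σ_{k∈U(t)} (y_k/π_k)·δ_k(t) are martingale increments. If for each t there is a constant a_t such that almost surely Σ_{k∈U(t)} |δ_k(t)| ≤ a_t, then for every ε > 0, Pr(t̂ - t ≥ Nε) ≤ exp(−N²ε² / (2·(sup_k |y_k/π_k|)² · Σ_{t=1}^T a_t²)). -/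
/-!
The Horvitz–Thompson error is `∑ₜ ξ(t)` with `ξ(t) = ∑ₖ (yₖ/πₖ) δₖ(t)`, a sum of martingale
differences bounded by `(supₖ |yₖ/πₖ|) aₜ`. Convexity of `exp` bounds `exp (λ ξ)` by the chord
`cosh (λ c) + (sinh (λ c) / c) ξ`, whose conditional mean is `cosh (λ c) ≤ exp (λ² c² / 2)`;
peeling off one increment at a time gives a sub-Gaussian moment-generating function for the
error, and the Chernoff bound gives the tail.
-/

open MeasureTheory Finset Real ProbabilityTheory NNReal

lemma Real.exp_mul_le_cosh_add_mul {l c x : ℝ} (hx : |x| ≤ c) :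
    exp (l * x) ≤ cosh (l * c) + sinh (l * c) / c * x := by
  rcases (abs_nonneg x).trans hx |>.eq_or_lt with rfl | hc
  · simp [abs_nonpos_iff.mp hx]
  obtain ⟨hlo, hhi⟩ := abs_le.mp hx
  set θ := (x + c) / (2 * c)
  have hθ0 : 0 ≤ θ := div_nonneg (by linarith) (by positivity)
  have hθ1 : 0 ≤ 1 - θ := by
    rw [sub_nonneg, div_le_one (by positivity)]; linarith
  have hchord := convexOn_exp.2 (Set.mem_univ (l * c)) (Set.mem_univ (-(l * c))) hθ0 hθ1
    (add_sub_cancel θ 1)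
  have hpoint : θ • (l * c) + (1 - θ) • -(l * c) = l * x := by
    simp only [θ, smul_eq_mul]; field_simp; ring
  rw [hpoint] at hchord
  refine hchord.trans_eq ?_
  simp only [θ, smul_eq_mul, cosh_eq, sinh_eq]
  field_simp
  ring

section

variable {Ω : Type*} {m m0 : MeasurableSpace Ω} {μ : Measure Ω}

lemma integral_mul_eq_zero_of_condExp_eq_zero [IsFiniteMeasure μ] (hm : m ≤ m0) {f g : Ω → ℝ}
    (hf : StronglyMeasurable[m] f) (hfg : Integrable (f * g) μ) (hg : Integrable g μ)
    (hg0 : μ[g | m] =ᵐ[μ] 0) : ∫ ω, f ω * g ω ∂μ = 0 :=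
  calc ∫ ω, f ω * g ω ∂μ = ∫ ω, μ[f * g | m] ω ∂μ := (integral_condExp hm).symm
    _ = ∫ ω, f ω * μ[g | m] ω ∂μ :=
      integral_congr_ae (condExp_mul_of_stronglyMeasurable_left hf hfg hg)
    _ = 0 := by
      rw [integral_eq_zero_of_ae]
      filter_upwards [hg0] with ω hω
      simp [hω]

-- Mathlib's `add_of_hasCondSubgaussianMGF` needs `StandardBorelSpace Ω`; this version does not.
lemma ProbabilityTheory.HasSubgaussianMGF.add_of_condExp_eq_zero [IsFiniteMeasure μ]
    (hm : m ≤ m0) {X Y : Ω → ℝ} {cX c : ℝ≥0} (hX : HasSubgaussianMGF X cX μ)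
    (hXm : StronglyMeasurable[m] X) (hY : Integrable Y μ) (hY0 : μ[Y | m] =ᵐ[μ] 0)
    (hYc : ∀ᵐ ω ∂μ, |Y ω| ≤ c) :
    HasSubgaussianMGF (fun ω ↦ X ω + Y ω) (cX + c ^ 2) μ := by
  have hexpY_bdd (t : ℝ) : ∀ᵐ ω ∂μ, ‖exp (t * Y ω)‖ ≤ exp (|t| * c) := by
    filter_upwards [hYc] with ω hω
    rw [norm_of_nonneg (exp_pos _).le, exp_le_exp]
    calc t * Y ω ≤ |t| * |Y ω| := (le_abs_self _).trans (abs_mul _ _).le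
      _ ≤ |t| * c := by gcongr
  have hexpY_meas (t : ℝ) : AEStronglyMeasurable (fun ω ↦ exp (t * Y ω)) μ :=
    continuous_exp.comp_aestronglyMeasurable (hY.1.const_mul t)
  have hexp_add (t : ℝ) (ω : Ω) : exp (t * (X ω + Y ω)) = exp (t * X ω) * exp (t * Y ω) := by
    rw [mul_add, exp_add]
  refine ⟨fun t ↦ ?_, fun t ↦ ?_⟩
  · simp_rw [hexp_add]
    exact (hX.integrable_exp_mul t).mul_bdd (hexpY_meas t) (hexpY_bdd t)
  have hexpX := hX.integrable_exp_mul t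
  have hchord : ∀ᵐ ω ∂μ, exp (t * X ω) * exp (t * Y ω) ≤
      exp (t * X ω) * (cosh (t * c) + sinh (t * c) / c * Y ω) := by
    filter_upwards [hYc] with ω hω
    exact mul_le_mul_of_nonneg_left (exp_mul_le_cosh_add_mul hω) (exp_pos _).le
  have hexpXY : Integrable (fun ω ↦ exp (t * X ω) * Y ω) μ :=
    hexpX.mul_bdd hY.1 (by simpa only [Real.norm_eq_abs] using hYc)
  have hcentered : ∫ ω, exp (t * X ω) * Y ω ∂μ = 0 :=
    integral_mul_eq_zero_of_condExp_eq_zero hm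
      (continuous_exp.comp_stronglyMeasurable (hXm.const_mul t)) hexpXY hY hY0
  calc mgf (fun ω ↦ X ω + Y ω) μ t = ∫ ω, exp (t * X ω) * exp (t * Y ω) ∂μ := by
        simp_rw [mgf, hexp_add]
    _ ≤ ∫ ω, exp (t * X ω) * (cosh (t * c) + sinh (t * c) / c * Y ω) ∂μ := by
        refine integral_mono_ae (hexpX.mul_bdd (hexpY_meas t) (hexpY_bdd t)) ?_ hchord
        simp_rw [mul_add]
        exact (hexpX.mul_const _).add (hexpXY.const_mul (sinh (t * c) / c) |>.congr
          (.of_forall fun ω ↦ by ring))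
    _ = cosh (t * c) * mgf X μ t + sinh (t * c) / c * ∫ ω, exp (t * X ω) * Y ω ∂μ := by
        rw [mgf, ← integral_const_mul, ← integral_const_mul, ← integral_add
          (hexpX.const_mul _) (hexpXY.const_mul _)]
        congr with ω
        ring
    _ ≤ exp ((t * c) ^ 2 / 2) * exp (cX * t ^ 2 / 2) := by
        rw [hcentered, mul_zero, add_zero]
        exact mul_le_mul (cosh_le_exp_half_sq _) (hX.mgf_le t) mgf_nonneg (exp_pos _).le
    _ = exp (↑(cX + c ^ 2) * t ^ 2 / 2) := by
        rw [← exp_add]; push_cast; ring_nf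

lemma condExp_fun_sum_const_mul_eq_zero {ι : Type*} {s : Finset ι} (w : ι → ℝ)
    {f : ι → Ω → ℝ} (hf : ∀ i ∈ s, Integrable (f i) μ) (hf0 : ∀ i ∈ s, μ[f i | m] =ᵐ[μ] 0) :
    μ[fun ω ↦ ∑ i ∈ s, w i * f i ω | m] =ᵐ[μ] 0 := by
  have hsum : (fun ω ↦ ∑ i ∈ s, w i * f i ω) = ∑ i ∈ s, w i • f i := by
    ext ω; simp [Finset.sum_apply]
  have hterm : ∀ᵐ ω ∂μ, ∀ i ∈ s, μ[w i • f i | m] ω = 0 :=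
    (Filter.eventually_all_finset s).2 fun i hi ↦ by
      filter_upwards [condExp_smul (w i) (f i) m, hf0 i hi] with ω h h0
      simp [h, h0]
  rw [hsum]
  filter_upwards [condExp_finsetSum (fun i hi ↦ (hf i hi).smul (w i)) m, hterm] with ω h h0
  simp [h, Finset.sum_apply, Finset.sum_eq_zero h0]

variable [IsProbabilityMeasure μ]

lemma hasSubgaussianMGF_sum_Icc_of_condExp_eq_zero {ℱ : Filtration ℕ m0} {ξ : ℕ → Ω → ℝ}
    {c : ℕ → ℝ≥0} {n : ℕ} (hadapted : ∀ t ∈ Icc 1 n, StronglyMeasurable[ℱ t] (ξ t))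
    (hint : ∀ t ∈ Icc 1 n, Integrable (ξ t) μ)
    (hmds : ∀ t ∈ Icc 1 n, μ[ξ t | ℱ (t - 1)] =ᵐ[μ] 0)
    (hbdd : ∀ t ∈ Icc 1 n, ∀ᵐ ω ∂μ, |ξ t ω| ≤ c t) :
    HasSubgaussianMGF (fun ω ↦ ∑ t ∈ Icc 1 n, ξ t ω) (∑ t ∈ Icc 1 n, c t ^ 2) μ := by
  induction n with
  | zero => simp
  | succ n ih =>
    have hsub : Icc 1 n ⊆ Icc 1 (n + 1) := Icc_subset_Icc_right n.le_succ
    have hlast : n + 1 ∈ Icc 1 (n + 1) := by simp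
    have hpartial : StronglyMeasurable[ℱ n] fun ω ↦ ∑ t ∈ Icc 1 n, ξ t ω :=
      Finset.stronglyMeasurable_fun_sum _ fun t ht ↦
        (hadapted t (hsub ht)).mono (ℱ.mono (mem_Icc.1 ht).2)
    simp_rw [sum_Icc_succ_top (Nat.le_add_left 1 n)]
    exact (ih (fun t ht ↦ hadapted t (hsub ht)) (fun t ht ↦ hint t (hsub ht))
      (fun t ht ↦ hmds t (hsub ht)) (fun t ht ↦ hbdd t (hsub ht))).add_of_condExp_eq_zero
      (ℱ.le n) hpartial (hint _ hlast) (hmds _ hlast) (hbdd _ hlast)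

end

lemma abs_sum_mul_le_iSup_abs_mul_sum_abs {ι : Type*} [Fintype ι] (w d : ι → ℝ) :
    |∑ k, w k * d k| ≤ (⨆ k, |w k|) * ∑ k, |d k| := by
  rw [Finset.mul_sum]
  refine (abs_sum_le_sum_abs _ _).trans (sum_le_sum fun k _ ↦ ?_)
  rw [abs_mul]
  exact mul_le_mul_of_nonneg_right
    (le_ciSup (Set.finite_range fun k ↦ |w k|).bddAbove k) (abs_nonneg _)

lemma horvitzThompson_sub_total_eq {ι : Type*} [Fintype ι] [DecidableEq ι] {y p : ι → ℝ}
    (hp : ∀ k, p k ≠ 0) {s : Finset ι} {I : Finset ℕ} {δ : ℕ → ι → ℝ}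
    (hrep : ∀ k, (if k ∈ s then (1 : ℝ) else 0) = p k + ∑ t ∈ I, δ t k) :
    ∑ k ∈ s, y k / p k - ∑ k, y k = ∑ t ∈ I, ∑ k, y k / p k * δ t k := by
  calc ∑ k ∈ s, y k / p k - ∑ k, y k
      = ∑ k, y k / p k * (p k + ∑ t ∈ I, δ t k) - ∑ k, y k := by
        simp_rw [← hrep, mul_ite, mul_one, mul_zero, sum_ite_mem, univ_inter]
    _ = ∑ t ∈ I, ∑ k, y k / p k * δ t k := by
        simp_rw [mul_add, sum_add_distrib, div_mul_cancel₀ _ (hp _), mul_sum]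
        rw [sum_comm]
        ring

theorem ht_splitting_exponential_inequality_general {Ω : Type*} {m0 : MeasurableSpace Ω}
    (μ : Measure Ω) [IsProbabilityMeasure μ]
    (N : ℕ) (y p : Fin N → ℝ) (hp : ∀ k, 0 < p k)
    (S : Ω → Finset (Fin N))
    (T : ℕ) (ℱ : Filtration ℕ m0)
    (δ : ℕ → Ω → Fin N → ℝ) (a : ℕ → ℝ)
    -- the `δ(t)` are martingale increments adapted to the filtration
    (hadapted : ∀ t ∈ Icc 1 T, ∀ k, StronglyMeasurable[ℱ t] fun ω => δ t ω k)
    (hint : ∀ t ∈ Icc 1 T, ∀ k, Integrable (fun ω => δ t ω k) μ)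
    (hmds : ∀ t ∈ Icc 1 T, ∀ k, μ[fun ω => δ t ω k | ℱ (t - 1)] =ᵐ[μ] 0)
    -- martingale representation of the sample membership indicators
    (hrep : ∀ᵐ ω ∂μ, ∀ k, (if k ∈ S ω then (1 : ℝ) else 0) =
        p k + ∑ t ∈ Icc 1 T, δ t ω k)
    -- ℓ¹ control of the increments
    (hbdd : ∀ t ∈ Icc 1 T, ∀ᵐ ω ∂μ, ∑ k, |δ t ω k| ≤ a t) :
    ∀ ε : ℝ, 0 < ε →
      μ {ω | (N : ℝ) * ε ≤ (∑ k ∈ S ω, y k / p k) - ∑ k, y k} ≤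
        ENNReal.ofReal (Real.exp (-((N : ℝ) ^ 2 * ε ^ 2) /
          (2 * (⨆ k, |y k / p k|) ^ 2 * ∑ t ∈ Icc 1 T, a t ^ 2))) := by
  intro ε hε
  set M := ⨆ k, |y k / p k|
  set ξ : ℕ → Ω → ℝ := fun t ω ↦ ∑ k, y k / p k * δ t ω k
  have hsubG : HasSubgaussianMGF (fun ω ↦ ∑ t ∈ Icc 1 T, ξ t ω)
      (∑ t ∈ Icc 1 T, ‖M * a t‖₊ ^ 2) μ := by
    refine hasSubgaussianMGF_sum_Icc_of_condExp_eq_zero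
      (fun t ht ↦ Finset.stronglyMeasurable_fun_sum _ fun k _ ↦ (hadapted t ht k).const_mul _)
      (fun t ht ↦ integrable_finsetSum _ fun k _ ↦ (hint t ht k).const_mul _)
      (fun t ht ↦ condExp_fun_sum_const_mul_eq_zero _ (fun k _ ↦ hint t ht k)
        (fun k _ ↦ hmds t ht k))
      (fun t ht ↦ ?_)
    filter_upwards [hbdd t ht] with ω hω
    calc |ξ t ω| ≤ M * ∑ k, |δ t ω k| := abs_sum_mul_le_iSup_abs_mul_sum_abs _ _
      _ ≤ |M * a t| := (mul_le_mul_of_nonneg_left hω (iSup_nonneg fun _ ↦ abs_nonneg _)).trans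
          (le_abs_self _)
      _ = ‖M * a t‖₊ := by simp
  have hdev : ∀ᵐ ω ∂μ, (∑ k ∈ S ω, y k / p k) - ∑ k, y k = ∑ t ∈ Icc 1 T, ξ t ω := by
    filter_upwards [hrep] with ω hω
    exact horvitzThompson_sub_total_eq (fun k ↦ (hp k).ne') hω
  calc μ {ω | (N : ℝ) * ε ≤ (∑ k ∈ S ω, y k / p k) - ∑ k, y k}
      = ENNReal.ofReal (μ.real {ω | (N : ℝ) * ε ≤ ∑ t ∈ Icc 1 T, ξ t ω}) := by
        rw [ofReal_measureReal]
        refine measure_congr ?_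
        filter_upwards [hdev] with ω hω
        exact congrArg ((N : ℝ) * ε ≤ ·) hω
    _ ≤ _ := by
        refine ENNReal.ofReal_le_ofReal ((hsubG.measure_ge_le (by positivity)).trans_eq ?_)
        push_cast
        simp_rw [Real.norm_eq_abs, sq_abs, mul_pow, ← mul_sum]
        ring_nf

/-- Theorem 1 of the paper: for a sampling design represented by a splitting
(martingale) scheme `I_U = π_U + Σ_{t=1}^T δ(t)` with `Σ_k |δ_k(t)| ≤ a_t` a.s.,
the Horvitz–Thompson estimator satisfies, for every `ε > 0`,
`Pr(t̂ − t ≥ Nε) ≤ exp(−N²ε²/(2 (sup_k |y_k/π_k|)² Σ_t a_t²))`. -/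
theorem ht_splitting_exponential_inequality {Ω : Type*} {m0 : MeasurableSpace Ω}
    (μ : Measure Ω) [IsProbabilityMeasure μ]
    (N : ℕ) (hN : 0 < N) (y p : Fin N → ℝ) (hp : ∀ k, 0 < p k)
    (S : Ω → Finset (Fin N))
    (T : ℕ) (ℱ : Filtration ℕ m0)
    (δ : ℕ → Ω → Fin N → ℝ) (a : ℕ → ℝ)
    -- the `δ(t)` are martingale increments adapted to the filtration
    (hadapted : ∀ t ∈ Icc 1 T, ∀ k, StronglyMeasurable[ℱ t] fun ω => δ t ω k)
    (hint : ∀ t ∈ Icc 1 T, ∀ k, Integrable (fun ω => δ t ω k) μ)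
    (hmds : ∀ t ∈ Icc 1 T, ∀ k, μ[fun ω => δ t ω k | ℱ (t - 1)] =ᵐ[μ] 0)
    -- martingale representation of the sample membership indicators
    (hrep : ∀ᵐ ω ∂μ, ∀ k, (if k ∈ S ω then (1 : ℝ) else 0) =
        p k + ∑ t ∈ Icc 1 T, δ t ω k)
    -- ℓ¹ control of the increments
    (hbdd : ∀ t ∈ Icc 1 T, ∀ᵐ ω ∂μ, ∑ k, |δ t ω k| ≤ a t) :
    ∀ ε : ℝ, 0 < ε →
      μ {ω | (N : ℝ) * ε ≤ (∑ k ∈ S ω, y k / p k) - ∑ k, y k} ≤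
        ENNReal.ofReal (Real.exp (-((N : ℝ) ^ 2 * ε ^ 2) /
          (2 * (⨆ k, |y k / p k|) ^ 2 * ∑ t ∈ Icc 1 T, a t ^ 2))) :=
  ht_splitting_exponential_inequality_general μ N y p hp S T ℱ δ a hadapted hint hmds hrep hbdd
end

section
/- Let S be a random subset of a finite population U with Pr(S = s) = p(s). Define J_1,…,J_n by sequentially drawing unit J_t from U \ {J_1,…,J_{t-1}} with probability p_{k,t} = π_{k|J_1,…,J_{t-1}}/(n−t+1), where π_{k|j_1,…,j_{t-1}} = Pr(k ∈ S | j_1,…,j_{t-1} ∈ S). If p(·) is a fixed-size-n design, then Pr({J_1,…,J_n} = s) = p(s) for every subset s of size n. -/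
open Finset
open Nat

variable {N : ℕ}

/-- Conditional inclusion probability `π_{k|J}` derived from a design `p` on subsets:
`π_{k|J} = Pr(k ∈ S ∧ J ⊆ S) / Pr(J ⊆ S)`. -/
noncomputable def designCondIncl (p : Finset (Fin N) → ℝ) (k : Fin N)
    (J : Finset (Fin N)) : ℝ :=
  (∑ s ∈ Finset.univ.filter (fun s => insert k J ⊆ s), p s) /
    (∑ s ∈ Finset.univ.filter (fun s => J ⊆ s), p s)

/-- Probability of drawing the ordered sequence `l` of units by the draw-by-draw
algorithm, starting with `r` draws remaining and already-selected set `J`: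
at each step a unit `j` is drawn with probability `π_{j|J}/(remaining draws)`. -/
noncomputable def seqProb (p : Finset (Fin N) → ℝ) :
    ℕ → Finset (Fin N) → List (Fin N) → ℝ
  | _, _, [] => 1
  | r, J, j :: js => designCondIncl p j J / r * seqProb p (r - 1) (insert j J) js

noncomputable def Fsum (p : Finset (Fin N) → ℝ) (J : Finset (Fin N)) : ℝ :=
  ∑ s ∈ Finset.univ.filter (fun s => J ⊆ s), p s

lemma Fsum_nonneg (p : Finset (Fin N) → ℝ) (hn : ∀ s, 0 ≤ p s) (J : Finset (Fin N)) :
    0 ≤ Fsum p J := Finset.sum_nonneg fun s _ => hn s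

lemma Fsum_anti (p : Finset (Fin N) → ℝ) (hn : ∀ s, 0 ≤ p s) {J J' : Finset (Fin N)}
    (h : J ⊆ J') : Fsum p J' ≤ Fsum p J := by
  apply Finset.sum_le_sum_of_subset_of_nonneg
  · intro x hx
    simp only [Finset.mem_filter, Finset.mem_univ, true_and] at *
    exact h.trans hx
  · intro s _ _; exact hn s

lemma seqProb_mul (p : Finset (Fin N) → ℝ) (hn : ∀ s, 0 ≤ p s) :
    ∀ (l : List (Fin N)) (J : Finset (Fin N)),
      seqProb p l.length J l * Fsum p J = Fsum p (J ∪ l.toFinset) / (l.length)!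
  | [], J => by simp [seqProb, Nat.factorial]
  | j :: js, J => by
    have hsub : J ⊆ J ∪ (j :: js).toFinset := Finset.subset_union_left
    by_cases h : Fsum p J = 0
    · have h2 : Fsum p (J ∪ (j :: js).toFinset) = 0 :=
        le_antisymm (h ▸ Fsum_anti p hn hsub) (Fsum_nonneg p hn _)
      have h2' : Fsum p (insert j (J ∪ js.toFinset)) = 0 := by
        rw [← Finset.union_insert, ← List.toFinset_cons]; exact h2
      simp [h, h2']
    · have ih := seqProb_mul p hn js (insert j J)
      have hF : designCondIncl p j J = Fsum p (insert j J) / Fsum p J := rfl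
      show designCondIncl p j J / ((j :: js).length : ℝ) *
          seqProb p ((j :: js).length - 1) (insert j J) js * Fsum p J = _
      have hlen : (j :: js).length - 1 = js.length := rfl
      rw [hlen, hF]
      have hunion : insert j J ∪ js.toFinset = J ∪ (j :: js).toFinset := by
        simp [Finset.insert_union, List.toFinset_cons, Finset.union_insert,
          Finset.union_comm]
      have e1 : Fsum p (insert j J) / Fsum p J / ((j :: js).length : ℝ) *
          seqProb p js.length (insert j J) js * Fsum p J =
          seqProb p js.length (insert j J) js * Fsum p (insert j J) /
            ((j :: js).length : ℝ) := by
        field_simp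
      rw [e1, ih, hunion, div_div]
      congr 1
      rw [List.length_cons, Nat.factorial_succ]
      push_cast; ring

/-- Lemma 2 of the paper: for a fixed-size-`n` design `p`, the draw-by-draw algorithm
with probabilities `p_{k,t} = π_{k|J_1,…,J_{t-1}}/(n−t+1)` selects each size-`n`
subset `s` with probability `p(s)`: summing the ordered-draw probabilities over all
orderings of `s` recovers `p(s)`. -/
theorem draw_by_draw_represents_design (n : ℕ) (p : Finset (Fin N) → ℝ)
    (hnonneg : ∀ s, 0 ≤ p s)
    (hprob : ∑ s : Finset (Fin N), p s = 1)
    (hfix : ∀ s : Finset (Fin N), p s ≠ 0 → s.card = n) :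
    ∀ s : Finset (Fin N), s.card = n →
      ∑ l ∈ (s.sort (· ≤ ·)).permutations.toFinset, seqProb p n ∅ l = p s := by
  intro s hs
  have hF0 : Fsum p (∅ : Finset (Fin N)) = 1 := by
    simpa [Fsum] using hprob
  have hFs : Fsum p s = p s := by
    unfold Fsum
    apply Finset.sum_eq_single_of_mem
    · simp
    · intro t ht hts
      by_contra hpt
      rw [Finset.mem_filter] at ht
      exact hts (Finset.eq_of_subset_of_card_le ht.2 (by rw [hfix t hpt, hs])).symm
  have hconst : ∀ l ∈ (s.sort (· ≤ ·)).permutations.toFinset,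
      seqProb p n ∅ l = p s / n ! := by
    intro l hl
    rw [List.mem_toFinset, List.mem_permutations] at hl
    have hlen : l.length = n := by rw [hl.length_eq, Finset.length_sort, hs]
    have htf : l.toFinset = s := by rw [List.toFinset_eq_of_perm _ _ hl, Finset.sort_toFinset]
    have key := seqProb_mul p hnonneg l ∅
    rw [hlen, htf, hF0, mul_one, Finset.empty_union, hFs] at key
    exact key
  rw [Finset.sum_congr rfl hconst, Finset.sum_const]
  have hcard : (s.sort (· ≤ ·)).permutations.toFinset.card = n ! := by
    rw [List.toFinset_card_of_nodup (List.nodup_permutations _ (Finset.sort_nodup _ _)),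
      List.length_permutations, Finset.length_sort, hs]
  rw [hcard, nsmul_eq_mul]
  field_simp
end

section
/- Suppose a sampling design on U with indicators I_U = (I_1,…,I_N) is conditionally negatively associated (CNA). Then the complementary design with indicators J_U = 1 − I_U is also CNA. In particular, since Till\'e's elimination procedure is CNA, the generalized Midzuno method (its complementary design) is CNA. -/
open MeasureTheory ProbabilityTheory

variable {Ω : Type*} [MeasurableSpace Ω] {N : ℕ}

/-- A family of sample-membership indicators `I` is negatively associated (NA) under `μ`
if for all disjoint index sets `A, B` and coordinatewise non-decreasing functions `f, g`
depending only on the `A`- resp. `B`-coordinates, `Cov[f(I), g(I)] ≤ 0`. -/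
def IsNA (μ : Measure Ω) (I : Ω → Fin N → ℝ) : Prop :=
  ∀ A B : Finset (Fin N), Disjoint A B →
    ∀ f g : (Fin N → ℝ) → ℝ, Monotone f → Monotone g →
      (∀ x y : Fin N → ℝ, (∀ k ∈ A, x k = y k) → f x = f y) →
      (∀ x y : Fin N → ℝ, (∀ k ∈ B, x k = y k) → g x = g y) →
      Integrable (fun ω => f (I ω)) μ → Integrable (fun ω => g (I ω)) μ →
      Integrable (fun ω => f (I ω) * g (I ω)) μ →
      ∫ ω, f (I ω) * g (I ω) ∂μ ≤ (∫ ω, f (I ω) ∂μ) * ∫ ω, g (I ω) ∂μ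

/-- A design is conditionally negatively associated (CNA) if, after conditioning on any
subset `C` of the sample indicators taking any values `c`, the design is still NA. -/
def IsCNA (μ : Measure Ω) (I : Ω → Fin N → ℝ) : Prop :=
  ∀ C : Finset (Fin N), ∀ c : Fin N → ℝ,
    0 < μ {ω | ∀ k ∈ C, I ω k = c k} →
    IsNA (μ[|{ω | ∀ k ∈ C, I ω k = c k}]) I

/-!
The reflection `x ↦ 1 - x` reverses the coordinatewise order, so for non-decreasing `f`
the function `f̄ x = -f (1 - x)` is again non-decreasing, depends on the same coordinates,
and `f (J) * g (J) = f̄ (I) * ḡ (I)` for `J = 1 - I`; hence NA of `I` applied to `f̄, ḡ` is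
NA of `J` for `f, g`. Conditioning on `J_C = c` is conditioning on `I_C = 1 - c`.
-/

lemma Monotone.neg_comp_const_sub {α β : Type*} [AddCommGroup α] [PartialOrder α]
    [IsOrderedAddMonoid α] [AddCommGroup β] [PartialOrder β] [IsOrderedAddMonoid β]
    {f : α → β} (hf : Monotone f) (a : α) : Monotone fun x => -f (a - x) :=
  fun _ _ hxy => neg_le_neg (hf (sub_le_sub_left hxy a))

lemma DependsOn.neg_comp_one_sub {ι R β : Type*} [One R] [Sub R] [Neg β]
    {f : (ι → R) → β} {s : Set ι} (hf : DependsOn f s) :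
    DependsOn (fun x => -f fun i => 1 - x i) s :=
  fun _ _ hxy => congrArg Neg.neg (hf fun i hi => by rw [hxy i hi])

lemma IsNA.one_sub {μ : Measure Ω} {I : Ω → Fin N → ℝ} (hNA : IsNA μ I) :
    IsNA μ (fun ω k => 1 - I ω k) := by
  intro A B hAB f g hf hg hfA hgB hfi hgi hfgi
  have hcov := hNA A B hAB (fun x => -f fun k => 1 - x k)
    (fun x => -g fun k => 1 - x k)
    (hf.neg_comp_const_sub 1) (hg.neg_comp_const_sub 1)
    (DependsOn.neg_comp_one_sub (f := f) (s := (A : Set (Fin N))) hfA)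
    (DependsOn.neg_comp_one_sub (f := g) (s := (B : Set (Fin N))) hgB)
    hfi.neg hgi.neg (by simpa only [neg_mul_neg] using hfgi)
  simpa only [neg_mul_neg, integral_neg] using hcov

lemma setOf_forall_one_sub_eq {α ι R : Type*} [AddCommGroup R] [One R] (I : α → ι → R)
    (C : Finset ι) (c : ι → R) :
    {ω | ∀ k ∈ C, 1 - I ω k = c k} = {ω | ∀ k ∈ C, I ω k = 1 - c k} := by
  ext ω
  simp only [Set.mem_ofPred_eq, sub_eq_iff_eq_add', eq_sub_iff_add_eq, eq_comm (a := (1 : R))]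

theorem complement_design_CNA_general (μ : Measure Ω)
    (I : Ω → Fin N → ℝ)
    (hCNA : IsCNA μ I) :
    IsCNA μ (fun ω k => 1 - I ω k) := by
  intro C c hpos
  rw [setOf_forall_one_sub_eq] at hpos ⊢
  exact (hCNA C (1 - c) hpos).one_sub

/-- If a sampling design with indicators `I` (taking values in `{0,1}`) is CNA, then the
complementary design with indicators `J = 1 − I` is also CNA.  (In particular, since
Tillé's elimination procedure is CNA, the generalized Midzuno method is CNA.) -/
theorem complement_design_CNA (μ : Measure Ω) [IsProbabilityMeasure μ]
    (I : Ω → Fin N → ℝ) (hI : ∀ ω k, I ω k = 0 ∨ I ω k = 1)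
    (hCNA : IsCNA μ I) :
    IsCNA μ (fun ω k => 1 - I ω k) :=
  complement_design_CNA_general μ I hCNA
end
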